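/- Let P and Q be finite nonempty sets of points in ℝ^M with at least two points in P, and let p₁, p₂ ∈ P be distinct points with p₁ ≼ p₂. Then removing the dominated point p₂ from P does not change the dominance move: DoM(P \ {p₂}, Q) = DoM(P, Q). (This justifies Step 1 of the exact algorithm, which removes dominated points of P before computing DoM.) -/
import Mathlib


/-- Point `p` weakly dominates point `q`: `p m ≤ q m` for every coordinate. -/
def WDom {M : ℕ} (p q : Fin M → ℝ) : Prop := ∀ m, p m ≤ q m

/-- Set `P` weakly dominates set `Q`. -/
def SetWDom {M : ℕ} (P Q : Finset (Fin M → ℝ)) : Prop :=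
  ∀ q ∈ Q, ∃ p ∈ P, WDom p q

/-- Manhattan distance. -/
noncomputable def mdist {M : ℕ} (p p' : Fin M → ℝ) : ℝ := ∑ m, |p m - p' m|

/-- Dominance move: infimum of total Manhattan move of a family `(f p)_{p ∈ P}`
whose image set weakly dominates `Q`. -/
noncomputable def DoM {M : ℕ} (P Q : Finset (Fin M → ℝ)) : ℝ :=
  sInf { c : ℝ | ∃ f : (Fin M → ℝ) → (Fin M → ℝ),
    (∀ q ∈ Q, ∃ p ∈ P, WDom (f p) q) ∧ c = ∑ p ∈ P, mdist p (f p) }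

lemma mdist_nonneg' {M : ℕ} (p p' : Fin M → ℝ) : 0 ≤ mdist p p' :=
  Finset.sum_nonneg fun _ _ => abs_nonneg _

lemma mdist_self' {M : ℕ} (p : Fin M → ℝ) : mdist p p = 0 := by
  simp [mdist]

theorem dom_erase_dominated_left {M : ℕ} (P Q : Finset (Fin M → ℝ))
    (hP : P.Nonempty) (hQ : Q.Nonempty)
    (p₁ p₂ : Fin M → ℝ) (hp₁ : p₁ ∈ P) (hp₂ : p₂ ∈ P) (hne : p₁ ≠ p₂)
    (hdom : WDom p₁ p₂) :
    DoM (P.erase p₂) Q = DoM P Q := by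
  have hp₁e : p₁ ∈ P.erase p₂ := Finset.mem_erase.2 ⟨hne, hp₁⟩
  set S1 : Set ℝ := { c : ℝ | ∃ f : (Fin M → ℝ) → (Fin M → ℝ),
    (∀ q ∈ Q, ∃ p ∈ P.erase p₂, WDom (f p) q) ∧ c = ∑ p ∈ P.erase p₂, mdist p (f p) } with hS1
  set S2 : Set ℝ := { c : ℝ | ∃ f : (Fin M → ℝ) → (Fin M → ℝ),
    (∀ q ∈ Q, ∃ p ∈ P, WDom (f p) q) ∧ c = ∑ p ∈ P, mdist p (f p) } with hS2
  have hDoM1 : DoM (P.erase p₂) Q = sInf S1 := rfl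
  have hDoM2 : DoM P Q = sInf S2 := rfl
  -- bounded below by 0
  have hbdd1 : BddBelow S1 := ⟨0, fun c ⟨f, _, hc⟩ => by
    rw [hc]; exact Finset.sum_nonneg fun p _ => mdist_nonneg' _ _⟩
  have hbdd2 : BddBelow S2 := ⟨0, fun c ⟨f, _, hc⟩ => by
    rw [hc]; exact Finset.sum_nonneg fun p _ => mdist_nonneg' _ _⟩
  -- nonemptiness witnesses
  have f0 : (Fin M → ℝ) → (Fin M → ℝ) := fun _ m => Q.inf' hQ (fun q => q m)
  have hS1ne : S1.Nonempty := by
    refine ⟨_, (fun _ m => Q.inf' hQ (fun q => q m)), fun q hq => ⟨p₁, hp₁e, fun m => ?_⟩, rfl⟩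
    exact Finset.inf'_le _ hq
  have hS2ne : S2.Nonempty := by
    refine ⟨_, (fun _ m => Q.inf' hQ (fun q => q m)), fun q hq => ⟨p₁, hp₁, fun m => ?_⟩, rfl⟩
    exact Finset.inf'_le _ hq
  rw [hDoM1, hDoM2]
  apply le_antisymm
  · -- sInf S1 ≤ sInf S2 : from any f for P build g for erase
    apply le_csInf hS2ne
    rintro c ⟨f, hdomf, rfl⟩
    set g : (Fin M → ℝ) → (Fin M → ℝ) :=
      Function.update f p₁ (fun m => min (f p₁ m) (f p₂ m)) with hg
    have hgp₁ : g p₁ = fun m => min (f p₁ m) (f p₂ m) := Function.update_self _ _ _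
    have hgother : ∀ p, p ≠ p₁ → g p = f p := fun p hp => Function.update_of_ne hp _ _
    have hmem : (∑ p ∈ P.erase p₂, mdist p (g p)) ∈ S1 := by
      refine ⟨g, fun q hq => ?_, rfl⟩
      obtain ⟨p, hp, hw⟩ := hdomf q hq
      by_cases h2 : p = p₂
      · exact ⟨p₁, hp₁e, fun m => le_trans (by rw [hgp₁]; exact min_le_right _ _)
          (h2 ▸ hw m)⟩
      · by_cases h1 : p = p₁
        · exact ⟨p₁, hp₁e, fun m => le_trans (by rw [hgp₁]; exact min_le_left _ _)
            (h1 ▸ hw m)⟩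
        · exact ⟨p, Finset.mem_erase.2 ⟨h2, hp⟩, by rw [hgother p h1]; exact hw⟩
    refine le_trans (csInf_le hbdd1 hmem) ?_
    -- ∑_{erase} mdist p (g p) ≤ ∑_P mdist p (f p)
    have key : mdist p₁ (g p₁) ≤ mdist p₁ (f p₁) + mdist p₂ (f p₂) := by
      rw [hgp₁, mdist, mdist, mdist, ← Finset.sum_add_distrib]
      apply Finset.sum_le_sum
      intro m _
      have hxy : p₁ m ≤ p₂ m := hdom m
      rcases min_cases (f p₁ m) (f p₂ m) with ⟨he, _⟩ | ⟨he, hlt⟩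
      · rw [he]; linarith [abs_nonneg (p₂ m - f p₂ m)]
      · rw [he, abs_sub_le_iff]
        constructor <;>
          linarith [le_abs_self (p₂ m - f p₂ m), neg_abs_le (p₁ m - f p₁ m),
            abs_nonneg (p₁ m - f p₁ m), abs_nonneg (p₂ m - f p₂ m)]
    have hsplit2 : ∑ p ∈ P, mdist p (f p)
        = ∑ p ∈ (P.erase p₂).erase p₁, mdist p (f p) + mdist p₁ (f p₁) + mdist p₂ (f p₂) := by
      rw [Finset.sum_erase_add _ _ hp₁e, Finset.sum_erase_add _ _ hp₂]
    have hsplit1 : ∑ p ∈ P.erase p₂, mdist p (g p)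
        = ∑ p ∈ (P.erase p₂).erase p₁, mdist p (f p) + mdist p₁ (g p₁) := by
      rw [← Finset.sum_erase_add _ _ hp₁e]
      congr 1
      apply Finset.sum_congr rfl
      intro p hp
      rw [hgother p (Finset.ne_of_mem_erase hp)]
    rw [hsplit1, hsplit2]
    linarith
  · -- sInf S2 ≤ sInf S1 : S1 ⊆ S2 (extend f by f p₂ := p₂)
    apply le_csInf hS1ne
    rintro c ⟨f, hdomf, rfl⟩
    set g : (Fin M → ℝ) → (Fin M → ℝ) := Function.update f p₂ p₂ with hg
    have hgp₂ : g p₂ = p₂ := Function.update_self _ _ _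
    have hgother : ∀ p, p ≠ p₂ → g p = f p := fun p hp => Function.update_of_ne hp _ _
    have hmem : (∑ p ∈ P, mdist p (g p)) ∈ S2 := by
      refine ⟨g, fun q hq => ?_, rfl⟩
      obtain ⟨p, hp, hw⟩ := hdomf q hq
      have hpne : p ≠ p₂ := Finset.ne_of_mem_erase hp
      exact ⟨p, Finset.mem_of_mem_erase hp, by rw [hgother p hpne]; exact hw⟩
    refine le_trans (csInf_le hbdd2 hmem) ?_
    have : ∑ p ∈ P, mdist p (g p)
        = ∑ p ∈ P.erase p₂, mdist p (g p) + mdist p₂ (g p₂) :=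
      (Finset.sum_erase_add _ _ hp₂).symm
    rw [this, hgp₂, mdist_self', add_zero]
    apply le_of_eq
    apply Finset.sum_congr rfl
    intro p hp
    rw [hgother p (Finset.ne_of_mem_erase hp)]
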